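/- Let G = (L, Σ, δ, O) be a POMDP, T ⊆ L, and l ∈ L. Player 1 has an observation-based strategy that is positive winning for Safe(T) from l if and only if there exists a state l' ∈ L such that Player 1 has an observation-based strategy that is positive winning for Until(T, {l'}) from l and an observation-based strategy that is almost-sure winning for Safe(T) from l'. -/

import Mathlib

open scoped ENNReal

/-- A partially-observable Markov decision process (POMDP) with states `L`,
actions `A` and observations `O`: a probabilistic transition function and an
observation function (the observations partition the state space). -/
structure POMDP (L : Type) (A : Type) (O : Type) where
  δ : L → A → PMF L
  obs : L → O

namespace POMDP

variable {L A O : Type}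

/-- A (randomized) strategy: given the initial state and the history of
(action, state) steps played so far, it chooses a distribution on actions. -/
abbrev Strategy (L A : Type) := L → List (A × L) → PMF A

/-- The sequence of states visited along a finite prefix. -/
def statesOf (l : L) (h : List (A × L)) : List L := l :: h.map Prod.snd

/-- Auxiliary probability of a finite prefix, for a strategy `π` given as a
function of the remaining history. -/
noncomputable def prefProbAux (M : POMDP L A O) :
    (List (A × L) → PMF A) → L → List (A × L) → ℝ≥0∞
  | _, _, [] => 1
  | π, l, (a, l') :: h =>
      π [] a * M.δ l a l' * M.prefProbAux (fun h' => π ((a, l') :: h')) l' h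

/-- The probability, under strategy `α` from state `l`, that the play starts
with the finite prefix `h` of (action, state) steps. -/
noncomputable def prefProb (M : POMDP L A O) (α : Strategy L A) (l : L)
    (h : List (A × L)) : ℝ≥0∞ :=
  M.prefProbAux (α l) l h

/-- A prefix is consistent with `α` from `l` if it has positive probability. -/
def Consistent (M : POMDP L A O) (α : Strategy L A) (l : L) (h : List (A × L)) : Prop :=
  0 < M.prefProb α l h

/-- The probability, under strategy `α` from state `l`, that the length-`n`
prefix of the play satisfies the predicate `P`. -/
noncomputable def horizonProb (M : POMDP L A O) [Fintype L] [Fintype A]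
    (α : Strategy L A) (l : L) (n : ℕ) (P : List (A × L) → Prop) : ℝ≥0∞ :=
  ∑ f : Fin n → A × L,
    Set.indicator {g : Fin n → A × L | P (List.ofFn g)}
      (fun g => M.prefProb α l (List.ofFn g)) f

/-- `Pr_l^α(Reach(T))`: probability that the play visits a state of `T`
(as the increasing limit of the finite-horizon reachability probabilities). -/
noncomputable def reachProb (M : POMDP L A O) [Fintype L] [Fintype A]
    (α : Strategy L A) (l : L) (T : Set L) : ℝ≥0∞ :=
  ⨆ n, M.horizonProb α l n (fun h => ∃ s ∈ statesOf l h, s ∈ T)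

/-- `Pr_l^α(Safe(T))`: probability that all states of the play lie in `T`
(as the decreasing limit of the finite-horizon safety probabilities). -/
noncomputable def safeProb (M : POMDP L A O) [Fintype L] [Fintype A]
    (α : Strategy L A) (l : L) (T : Set L) : ℝ≥0∞ :=
  ⨅ n, M.horizonProb α l n (fun h => ∀ s ∈ statesOf l h, s ∈ T)

/-- `Pr_l^α(Until(T₁,T₂))`: probability that the play visits `T₂` at some
position `k` with all positions `≤ k` in `T₁`. -/
noncomputable def untilProb (M : POMDP L A O) [Fintype L] [Fintype A]
    (α : Strategy L A) (l : L) (T₁ T₂ : Set L) : ℝ≥0∞ :=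
  ⨆ n, M.horizonProb α l n (fun h => ∃ k, ∃ hk : k < (statesOf l h).length,
      (statesOf l h).get ⟨k, hk⟩ ∈ T₂ ∧
      ∀ j, ∀ hj : j < (statesOf l h).length, j ≤ k → (statesOf l h).get ⟨j, hj⟩ ∈ T₁)

/-- `Pr_l^α(coBüchi(T))`: probability that from some point on all states of
the play lie in `T`. -/
noncomputable def coBuchiProb (M : POMDP L A O) [Fintype L] [Fintype A]
    (α : Strategy L A) (l : L) (T : Set L) : ℝ≥0∞ :=
  ⨆ k, ⨅ n, M.horizonProb α l n (fun h =>
    ∀ j, ∀ hj : j < (statesOf l h).length, k ≤ j → (statesOf l h).get ⟨j, hj⟩ ∈ T)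

/-- `Pr_l^α(Büchi(T))`: probability that the play visits `T` infinitely often. -/
noncomputable def buchiProb (M : POMDP L A O) [Fintype L] [Fintype A]
    (α : Strategy L A) (l : L) (T : Set L) : ℝ≥0∞ :=
  ⨅ k, ⨆ n, M.horizonProb α l n (fun h =>
    ∃ j, ∃ hj : j < (statesOf l h).length, k ≤ j ∧ (statesOf l h).get ⟨j, hj⟩ ∈ T)

/-- A strategy is observation-based if it plays the same distribution after any
two prefixes with the same sequences of observations and of actions. -/
def ObservationBased (M : POMDP L A O) (α : Strategy L A) : Prop :=
  ∀ l l' (h h' : List (A × L)), M.obs l = M.obs l' →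
    h.map Prod.fst = h'.map Prod.fst →
    h.map (fun p => M.obs p.2) = h'.map (fun p => M.obs p.2) →
    α l h = α l' h'

/-- A strategy is pure if it always plays a Dirac distribution. -/
def PureStrategy (α : Strategy L A) : Prop := ∀ l h, ∃ a, α l h = PMF.pure a

/-- Edge of the underlying graph of the POMDP. -/
def Edge (M : POMDP L A O) (l l' : L) : Prop := ∃ a, 0 < M.δ l a l'

/-- Reachability in the underlying graph of the POMDP. -/
def ReachableFrom (M : POMDP L A O) (l l' : L) : Prop :=
  Relation.ReflTransGen M.Edge l l'

/-- The memory state reached by a memory-update function `u` (together with the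
current state) after running through a prefix. -/
def memRun (M : POMDP L A O) {Mem : Type} (u : Mem → O → A → Mem) :
    Mem → L → List (A × L) → Mem × L
  | m, l, [] => (m, l)
  | m, l, (a, l') :: h => M.memRun u (u m (M.obs l) a) l' h

/-- The (observation-based) strategy induced by a finite-memory machine given by
memory-update function `u`, next-action function `next` and initial memory `m0`. -/
def fmStrategy (M : POMDP L A O) {Mem : Type} (u : Mem → O → A → Mem)
    (next : Mem → O → PMF A) (m0 : Mem) : Strategy L A :=
  fun l h =>
    let p := M.memRun u m0 l h
    next p.1 (M.obs p.2)

/-- The distribution choosing `x` and `y` with probability 1/2 each. -/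
noncomputable def half (x y : L) : PMF L :=
  (PMF.uniformOfFintype Bool).map (fun b => if b then x else y)

end POMDP

/-!
If no safe prefix of positive probability ended in a state from which some observation-based
strategy is almost-surely safe, then, by compactness of the space of pure observation-consistent
strategies, there would be a uniform horizon `R` such that from every state reached along a safe
prefix no such pure strategy stays surely in `T` for `R` steps. Applied to the pure strategy that
picks, after each history, an action of probability at least `1 / |A|` under a given randomized
strategy, this yields an exit from `T` within `R` steps of probability at least `c ^ R`, where `c`
is `1 / |A|` times the least positive transition probability. Hence the probability of staying in
`T` for `m * R` steps is at most `(1 - c ^ R) ^ m → 0`.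
Conversely, following a safe prefix of positive probability to `l'` and then switching to the
almost-surely safe strategy from `l'` stays in `T` with positive probability.
-/

theorem PMF.sum_coe {X : Type*} [Fintype X] (q : PMF X) : ∑ x, q x = 1 := by
  rw [← tsum_fintype (L := .unconditional _), q.tsum_coe]

theorem PMF.exists_inv_card_le {X : Type*} [Fintype X] (p : PMF X) :
    ∃ x, (Fintype.card X : ℝ≥0∞)⁻¹ ≤ p x := by
  by_contra! h
  have : Nonempty X := ⟨p.support_nonempty.some⟩
  have hlt := ENNReal.sum_lt_sum_of_nonempty Finset.univ_nonempty fun x _ => h x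
  rw [p.sum_coe, Finset.sum_const, Finset.card_univ, nsmul_eq_mul,
    ENNReal.mul_inv_cancel (by simp) (by simp)] at hlt
  exact hlt.false

theorem ENNReal.exists_pos_le_of_pos {ι : Type*} [Finite ι] (f : ι → ℝ≥0∞) :
    ∃ ε, 0 < ε ∧ ε ≤ 1 ∧ ∀ i, 0 < f i → ε ≤ f i := by
  classical
  cases isEmpty_or_nonempty ι
  · exact ⟨1, one_pos, le_rfl, fun i => isEmptyElim i⟩
  obtain ⟨i₀, hi₀⟩ := Finite.exists_min fun i => if 0 < f i then min (f i) 1 else 1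
  refine ⟨_, ?_, ?_, fun i hi => (hi₀ i).trans ?_⟩
  · split_ifs with h <;> simp [h]
  · split_ifs <;> simp
  · simp [hi]

theorem Fintype.sum_ofFn_succ {X M : Type*} [Fintype X] [AddCommMonoid M] {n : ℕ}
    (F : List X → M) :
    ∑ f : Fin (n + 1) → X, F (List.ofFn f) = ∑ x, ∑ g : Fin n → X, F (x :: List.ofFn g) := by
  rw [← (Fin.consEquiv fun _ => X).sum_comp, Fintype.sum_prod_type]
  simp [Fin.consEquiv, List.ofFn_succ]

namespace POMDP

variable {L A O : Type}

def shiftBy {β : Type} (π : List (A × L) → β) (w : List (A × L)) : List (A × L) → β :=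
  fun h => π (w ++ h)

@[simp]
theorem shiftBy_nil {β : Type} (π : List (A × L) → β) : shiftBy π [] = π := rfl

def lastState : L → List (A × L) → L
  | t, [] => t
  | _, (_, u) :: h => lastState u h

@[simp]
theorem lastState_nil (t : L) : lastState t ([] : List (A × L)) = t := rfl

theorem statesOf_cons (t : L) (x : A × L) (w : List (A × L)) :
    statesOf t (x :: w) = t :: statesOf x.2 w := rfl

theorem statesOf_take (t : L) (w : List (A × L)) (k : ℕ) :
    statesOf t (w.take k) = (statesOf t w).take (k + 1) := by
  simp [statesOf, List.map_take]

theorem lastState_take (t : L) (w : List (A × L)) (k : ℕ) (hk : k < (statesOf t w).length) :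
    lastState t (w.take k) = (statesOf t w)[k] := by
  induction w generalizing t k with
  | nil => simp_all [statesOf]
  | cons x w ih =>
    cases k with
    | zero => rfl
    | succ k => exact ih x.2 k (by simp_all [statesOf])

theorem lastState_eq_getElem (t : L) (w : List (A × L)) :
    lastState t w = (statesOf t w)[w.length]'(by simp [statesOf]) := by
  simpa using lastState_take t w w.length (by simp [statesOf])

section

variable (M : POMDP L A O)

theorem prefProbAux_cons (π : List (A × L) → PMF A) (t : L) (x : A × L) (w : List (A × L)) :
    M.prefProbAux π t (x :: w) = π [] x.1 * M.δ t x.1 x.2 * M.prefProbAux (shiftBy π [x]) x.2 w :=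
  rfl

theorem prefProbAux_le_one (π : List (A × L) → PMF A) (t : L) (w : List (A × L)) :
    M.prefProbAux π t w ≤ 1 := by
  induction w generalizing π t with
  | nil => exact le_rfl
  | cons x w ih =>
    rw [prefProbAux_cons]
    exact mul_le_one' (mul_le_one' (PMF.coe_le_one _ _) (PMF.coe_le_one _ _)) (ih _ _)

theorem prefProbAux_le_take (π : List (A × L) → PMF A) (t : L) (w : List (A × L)) (k : ℕ) :
    M.prefProbAux π t w ≤ M.prefProbAux π t (w.take k) := by
  induction w generalizing π t k with
  | nil => simp
  | cons x w ih =>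
    cases k with
    | zero => exact M.prefProbAux_le_one π t _
    | succ k =>
      rw [List.take_succ_cons, prefProbAux_cons, prefProbAux_cons]
      exact mul_le_mul_right (ih _ _ k) _

theorem prefProbAux_congr {π π' : List (A × L) → PMF A} (t : L) (w : List (A × L))
    (h : ∀ v : List (A × L), v.length < w.length → π v = π' v) :
    M.prefProbAux π t w = M.prefProbAux π' t w := by
  induction w generalizing π π' t with
  | nil => rfl
  | cons x w ih =>
    rw [prefProbAux_cons, prefProbAux_cons, h [] (by simp)]
    congr 1
    exact ih _ fun v hv => h (x :: v) (by simpa using hv)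

/-- `ObservationBased`, for the strategy `α l` from a fixed initial state `l`. -/
def ObsConsistent {β : Type} (π : List (A × L) → β) : Prop :=
  ∀ h h' : List (A × L), h.map Prod.fst = h'.map Prod.fst →
    h.map (fun p => M.obs p.2) = h'.map (fun p => M.obs p.2) → π h = π h'

end

section

variable {M : POMDP L A O}

theorem ObservationBased.obsConsistent {α : Strategy L A} (hα : M.ObservationBased α) (l : L) :
    M.ObsConsistent (α l) :=
  fun h h' hf ho => hα l l h h' rfl hf ho

theorem ObsConsistent.observationBased {π : List (A × L) → PMF A} (hπ : M.ObsConsistent π) :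
    M.ObservationBased fun _ => π :=
  fun _ _ h h' _ hf ho => hπ h h' hf ho

theorem ObsConsistent.shiftBy {β : Type} {π : List (A × L) → β} (hπ : M.ObsConsistent π)
    (w : List (A × L)) : M.ObsConsistent (shiftBy π w) :=
  fun h h' hf ho => hπ (w ++ h) (w ++ h') (by simp [hf]) (by simp [ho])

theorem ObsConsistent.comp {β γ : Type} {π : List (A × L) → β} (hπ : M.ObsConsistent π)
    (f : β → γ) : M.ObsConsistent (f ∘ π) :=
  fun h h' hf ho => congrArg f (hπ h h' hf ho)

def switchAt (α₁ α₂ : Strategy L A) (l' : L) (k : ℕ) : Strategy L A :=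
  fun t h => if h.length < k then α₁ t h else α₂ l' (h.drop k)

theorem ObservationBased.switchAt {α₁ α₂ : Strategy L A} (h₁ : M.ObservationBased α₁)
    (h₂ : M.ObservationBased α₂) (l' : L) (k : ℕ) : M.ObservationBased (switchAt α₁ α₂ l' k) := by
  intro t t' h h' hobs hf ho
  have hlen : h.length = h'.length := by simpa using congrArg List.length hf
  unfold POMDP.switchAt
  rw [hlen]
  split_ifs
  · exact h₁ t t' h h' hobs hf ho
  · exact h₂ l' l' _ _ rfl (by rw [List.map_drop, List.map_drop, hf])
      (by rw [List.map_drop, List.map_drop, ho])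

end

section

variable (M : POMDP L A O) (T : Set L)

def SurelySafe : (List (A × L) → A) → L → ℕ → Prop
  | _, t, 0 => t ∈ T
  | σ, t, n + 1 => t ∈ T ∧ ∀ u, 0 < M.δ t (σ []) u → SurelySafe (shiftBy σ [(σ [], u)]) u n

variable {M T}

theorem SurelySafe.of_succ {σ : List (A × L) → A} {t : L} {n : ℕ}
    (h : M.SurelySafe T σ t (n + 1)) : M.SurelySafe T σ t n := by
  induction n generalizing σ t with
  | zero => exact h.1
  | succ n ih => exact ⟨h.1, fun u hu => ih (h.2 u hu)⟩

theorem SurelySafe.mono {σ : List (A × L) → A} {t : L} {m n : ℕ} (h : M.SurelySafe T σ t n)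
    (hmn : m ≤ n) : M.SurelySafe T σ t m := by
  induction hmn with
  | refl => exact h
  | step _ ih => exact ih h.of_succ

section Topology

variable [TopologicalSpace A] [DiscreteTopology A]

theorem isClosed_setOf_surelySafe (t : L) (n : ℕ) :
    IsClosed {σ : List (A × L) → A | M.SurelySafe T σ t n} := by
  induction n generalizing t with
  | zero => exact isClosed_const
  | succ n ih =>
    have hset : {σ : List (A × L) → A | M.SurelySafe T σ t (n + 1)} =
        {_σ | t ∈ T} ∩ ⋂ a, ⋂ u, {σ | σ [] = a ∧ 0 < M.δ t a u →
          M.SurelySafe T (shiftBy σ [(a, u)]) u n} := by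
      ext σ
      simp only [SurelySafe, Set.mem_inter_iff, Set.mem_iInter, Set.mem_ofPred_eq, and_imp]
      exact and_congr_right fun _ =>
        ⟨fun h a u ha hu => ha ▸ h u (ha ▸ hu), fun h u hu => h _ u rfl hu⟩
    rw [hset]
    refine isClosed_const.inter (isClosed_iInter fun a => isClosed_iInter fun u => ?_)
    have hfirst : Continuous fun σ : List (A × L) → A => σ [] := continuous_apply []
    have hshift : Continuous fun σ : List (A × L) → A => shiftBy σ [(a, u)] :=
      continuous_pi fun h => continuous_apply _
    exact isClosed_imp ((hfirst.isOpen_preimage {a} (isOpen_discrete _)).and isOpen_const)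
      ((ih u).preimage hshift)

theorem isClosed_setOf_obsConsistent : IsClosed {σ : List (A × L) → A | M.ObsConsistent σ} := by
  simp only [ObsConsistent, Set.ofPred_forall]
  refine isClosed_iInter fun h => isClosed_iInter fun h' => isClosed_iInter fun _ =>
    isClosed_iInter fun _ => isClosed_eq (continuous_apply h) (continuous_apply h')

end Topology

theorem exists_forall_surelySafe [Finite A] (t : L)
    (h : ∀ n, ∃ σ : List (A × L) → A, M.ObsConsistent σ ∧ M.SurelySafe T σ t n) :
    ∃ σ : List (A × L) → A, M.ObsConsistent σ ∧ ∀ n, M.SurelySafe T σ t n := by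
  let _ : TopologicalSpace A := ⊥
  have _ : DiscreteTopology A := ⟨rfl⟩
  obtain ⟨σ, hσ⟩ := IsCompact.nonempty_iInter_of_sequence_nonempty_isCompact_isClosed
    (fun n => {σ | M.ObsConsistent σ ∧ M.SurelySafe T σ t n})
    (fun n σ hσ => ⟨hσ.1, hσ.2.of_succ⟩) h (isClosed_setOf_obsConsistent.inter
      (isClosed_setOf_surelySafe (M := M) t 0)).isCompact
    fun n => isClosed_setOf_obsConsistent.inter (isClosed_setOf_surelySafe (M := M) t n)
  simp only [Set.mem_iInter, Set.mem_ofPred_eq] at hσ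
  exact ⟨σ, (hσ 0).1, fun n => (hσ n).2⟩

end

section

variable [Fintype L] [Fintype A] (M : POMDP L A O) (T : Set L)

open Classical in
noncomputable def safeUpTo : (List (A × L) → PMF A) → L → ℕ → ℝ≥0∞
  | _, t, 0 => if t ∈ T then 1 else 0
  | π, t, n + 1 =>
      if t ∈ T then ∑ x : A × L, π [] x.1 * M.δ t x.1 x.2 * safeUpTo (shiftBy π [x]) x.2 n
      else 0

theorem sum_mul_δ_eq_one (p : PMF A) (t : L) : ∑ x : A × L, p x.1 * M.δ t x.1 x.2 = 1 := by
  simp only [Fintype.sum_prod_type, ← Finset.mul_sum, PMF.sum_coe, mul_one]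

variable {M T}

theorem safeUpTo_of_notMem {π : List (A × L) → PMF A} {t : L} (ht : t ∉ T) (n : ℕ) :
    M.safeUpTo T π t n = 0 := by
  cases n <;> simp [safeUpTo, ht]

theorem safeUpTo_le_one (π : List (A × L) → PMF A) (t : L) (n : ℕ) :
    M.safeUpTo T π t n ≤ 1 := by
  induction n generalizing π t with
  | zero => unfold safeUpTo; split <;> simp
  | succ n ih =>
    unfold safeUpTo
    split
    · calc _ ≤ ∑ x : A × L, π [] x.1 * M.δ t x.1 x.2 :=
            Finset.sum_le_sum fun x _ => mul_le_of_le_one_right' (ih _ _)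
        _ = 1 := M.sum_mul_δ_eq_one _ t
    · exact zero_le_one

open Classical in
theorem horizonProb_safe_eq_safeUpTo (α : Strategy L A) (t : L) (n : ℕ) :
    M.horizonProb α t n (fun h => ∀ s ∈ statesOf t h, s ∈ T) = M.safeUpTo T (α t) t n := by
  simp only [horizonProb, prefProb, Set.indicator_apply, Set.mem_ofPred_eq]
  generalize α t = π
  induction n generalizing π t with
  | zero => simp [safeUpTo, statesOf, prefProbAux]
  | succ n ih =>
    rw [Fintype.sum_ofFn_succ fun w =>
      if ∀ s ∈ statesOf t w, s ∈ T then M.prefProbAux π t w else 0]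
    simp only [statesOf_cons, List.forall_mem_cons, prefProbAux_cons]
    by_cases ht : t ∈ T
    · simp only [ht, true_and, safeUpTo, if_true, ← ih, Finset.mul_sum]
      refine Finset.sum_congr rfl fun x _ => Finset.sum_congr rfl fun g _ => ?_
      split_ifs <;> simp
    · simp [ht, safeUpTo]

theorem safeProb_eq_iInf_safeUpTo (α : Strategy L A) (t : L) :
    M.safeProb α t T = ⨅ n, M.safeUpTo T (α t) t n := by
  simp only [safeProb, horizonProb_safe_eq_safeUpTo]

theorem safeUpTo_succ_of_mem {π : List (A × L) → PMF A} {t : L} (ht : t ∈ T) (n : ℕ) :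
    M.safeUpTo T π t (n + 1) =
      ∑ x : A × L, π [] x.1 * M.δ t x.1 x.2 * M.safeUpTo T (shiftBy π [x]) x.2 n := by
  simp [safeUpTo, ht]

theorem prefProbAux_mul_safeUpTo_le (π : List (A × L) → PMF A) (t : L) {w : List (A × L)}
    (hw : ∀ s ∈ statesOf t w, s ∈ T) (k : ℕ) :
    M.prefProbAux π t w * M.safeUpTo T (shiftBy π w) (lastState t w) k ≤
      M.safeUpTo T π t (w.length + k) := by
  induction w generalizing π t with
  | nil => simp [prefProbAux]
  | cons x w ih =>
    rw [statesOf_cons, List.forall_mem_cons] at hw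
    rw [List.length_cons, Nat.add_right_comm, safeUpTo_succ_of_mem hw.1, prefProbAux_cons,
      mul_assoc]
    calc _ ≤ π [] x.1 * M.δ t x.1 x.2 * M.safeUpTo T (shiftBy π [x]) x.2 (w.length + k) :=
          mul_le_mul_right (ih _ _ hw.2) _
      _ ≤ _ := Finset.single_le_sum (f := fun y : A × L =>
          π [] y.1 * M.δ t y.1 y.2 * M.safeUpTo T (shiftBy π [y]) y.2 (w.length + k))
          (fun _ _ => zero_le) (Finset.mem_univ x)

theorem safeUpTo_add_le (π : List (A × L) → PMF A) (t : L) (j k : ℕ) {b : ℝ≥0∞}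
    (hb : ∀ w : List (A × L), w.length = j → (∀ s ∈ statesOf t w, s ∈ T) →
      0 < M.prefProbAux π t w → M.safeUpTo T (shiftBy π w) (lastState t w) k ≤ b) :
    M.safeUpTo T π t (j + k) ≤ M.safeUpTo T π t j * b := by
  induction j generalizing π t with
  | zero =>
    by_cases ht : t ∈ T
    · simpa [safeUpTo, ht] using hb [] rfl (by simpa [statesOf]) (by simp [prefProbAux])
    · simp [safeUpTo_of_notMem ht]
  | succ j ih =>
    by_cases ht : t ∈ T
    swap
    · simp [safeUpTo_of_notMem ht]
    rw [Nat.add_right_comm, safeUpTo_succ_of_mem ht, safeUpTo_succ_of_mem ht, Finset.sum_mul]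
    refine Finset.sum_le_sum fun x _ => ?_
    rcases eq_or_ne (π [] x.1 * M.δ t x.1 x.2) 0 with hx | hx
    · simp [hx]
    rw [mul_assoc (π [] x.1 * M.δ t x.1 x.2)]
    refine mul_le_mul_right (ih (shiftBy π [x]) x.2 fun w hw hsafe hpos => ?_) _
    refine hb (x :: w) (by simp [hw]) ?_ ?_
    · rw [statesOf_cons, List.forall_mem_cons]
      exact ⟨ht, hsafe⟩
    · rw [prefProbAux_cons]
      exact ENNReal.mul_pos hx hpos.ne'

theorem safeUpTo_antitone (π : List (A × L) → PMF A) (t : L) :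
    Antitone (M.safeUpTo T π t) :=
  antitone_nat_of_succ_le fun n => by
    simpa using safeUpTo_add_le π t n 1 fun w _ _ _ => safeUpTo_le_one _ _ 1

theorem safeUpTo_mul_le_pow (π : List (A × L) → PMF A) (t : L) (R : ℕ) {q : ℝ≥0∞}
    (hq : ∀ w : List (A × L), (∀ s ∈ statesOf t w, s ∈ T) → 0 < M.prefProbAux π t w →
      M.safeUpTo T (shiftBy π w) (lastState t w) R ≤ q) (m : ℕ) :
    M.safeUpTo T π t (m * R) ≤ q ^ m := by
  induction m with
  | zero => simpa using safeUpTo_le_one π t 0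
  | succ m ih =>
    calc M.safeUpTo T π t ((m + 1) * R) ≤ M.safeUpTo T π t (m * R) * q := by
          rw [Nat.succ_mul]
          exact safeUpTo_add_le π t _ R fun w _ => hq w
      _ ≤ q ^ (m + 1) := by
          rw [pow_succ]
          exact mul_le_mul_left ih q

theorem safeUpTo_eq_one_of_surelySafe {σ : List (A × L) → A} {t : L} {n : ℕ}
    (h : M.SurelySafe T σ t n) : M.safeUpTo T (PMF.pure ∘ σ) t n = 1 := by
  induction n generalizing σ t with
  | zero => simp [safeUpTo, show t ∈ T from h]
  | succ n ih =>
    rw [safeUpTo_succ_of_mem h.1, ← M.sum_mul_δ_eq_one (PMF.pure (σ [])) t]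
    refine Finset.sum_congr rfl fun x _ => ?_
    by_cases hx : x.1 = σ [] ∧ 0 < M.δ t x.1 x.2
    · obtain ⟨a, u⟩ := x
      obtain ⟨rfl, hu⟩ := hx
      rw [show shiftBy (PMF.pure ∘ σ) [(σ [], u)] = PMF.pure ∘ shiftBy σ [(σ [], u)] from rfl,
        ih (h.2 u hu), mul_one]
      rfl
    · rcases not_and_or.mp hx with hx | hx
      · simp [hx]
      · simp [nonpos_iff_eq_zero.mp (not_lt.mp hx)]

theorem safeUpTo_add_pow_le_one {π : List (A × L) → PMF A} {σ : List (A × L) → A} {c : ℝ≥0∞}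
    (hc1 : c ≤ 1) (hc : ∀ h s u, 0 < M.δ s (σ h) u → c ≤ π h (σ h) * M.δ s (σ h) u)
    {t : L} {n : ℕ} (hσ : ¬M.SurelySafe T σ t n) : M.safeUpTo T π t n + c ^ n ≤ 1 := by
  induction n generalizing π σ t with
  | zero => simp [safeUpTo, show t ∉ T from hσ]
  | succ n ih =>
    by_cases ht : t ∈ T
    swap
    · simpa [safeUpTo_of_notMem ht] using pow_le_one₀ zero_le hc1
    obtain ⟨u, hu, hσu⟩ : ∃ u, 0 < M.δ t (σ []) u ∧
        ¬M.SurelySafe T (shiftBy σ [(σ [], u)]) u n := by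
      simpa [SurelySafe, ht] using hσ
    set x₀ : A × L := (σ [], u)
    have hleak := ih (π := shiftBy π [x₀]) (fun h => hc (x₀ :: h)) hσu
    classical
    set p := fun x : A × L => π [] x.1 * M.δ t x.1 x.2
    set S := fun x : A × L => M.safeUpTo T (shiftBy π [x]) x.2 n
    rw [safeUpTo_succ_of_mem ht]
    calc ∑ x, p x * S x + c ^ (n + 1) ≤ ∑ x, p x * S x + p x₀ * c ^ n := by
          rw [pow_succ']
          gcongr
          exact hc [] t u hu
      _ = ∑ x, p x * (S x + if x = x₀ then c ^ n else 0) := by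
          simp [mul_add, Finset.sum_add_distrib]
      _ ≤ ∑ x, p x * 1 := by
          refine Finset.sum_le_sum fun x _ => mul_le_mul_right ?_ _
          split_ifs with hx
          · exact hx ▸ hleak
          · simpa using safeUpTo_le_one _ _ n
      _ = 1 := by simpa using M.sum_mul_δ_eq_one (π []) t

open Classical in
theorem prefProb_le_untilProb (α : Strategy L A) (l : L) {w : List (A × L)}
    (hw : ∀ s ∈ statesOf l w, s ∈ T) : M.prefProb α l w ≤ M.untilProb α l T {lastState l w} := by
  refine le_iSup_of_le w.length ((le_of_eq ?_).trans
    (Finset.single_le_sum (fun _ _ => zero_le) (Finset.mem_univ w.get)))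
  rw [Set.indicator_of_mem, List.ofFn_get]
  rw [Set.mem_ofPred_eq, List.ofFn_get]
  exact ⟨w.length, by simp [statesOf], by simp [lastState_eq_getElem],
    fun j _ _ => hw _ (List.get_mem _ _)⟩

theorem exists_safe_prefix_of_untilProb_pos {α : Strategy L A} {l l' : L}
    (h : 0 < M.untilProb α l T {l'}) :
    ∃ w : List (A × L),
      0 < M.prefProb α l w ∧ (∀ s ∈ statesOf l w, s ∈ T) ∧ lastState l w = l' := by
  obtain ⟨n, hn⟩ := lt_iSup_iff.mp h
  obtain ⟨f, -, hf⟩ := Finset.exists_ne_zero_of_sum_ne_zero hn.ne'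
  have hmem := Set.mem_of_indicator_ne_zero hf
  rw [Set.indicator_of_mem hmem] at hf
  obtain ⟨k, hk, hl', hT⟩ := hmem
  refine ⟨(List.ofFn f).take k, (pos_iff_ne_zero.2 hf).trans_le (M.prefProbAux_le_take _ _ _ _),
    fun s hs => ?_, ?_⟩
  · rw [statesOf_take] at hs
    obtain ⟨j, hj, rfl⟩ := List.getElem_of_mem hs
    rw [List.length_take] at hj
    rw [List.getElem_take]
    exact hT j _ (by omega)
  · rw [lastState_take _ _ _ hk]
    simpa using hl'

theorem almostSureSafe_of_forall_surelySafe {t : L}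
    (h : ∀ n, ∃ σ : List (A × L) → A, M.ObsConsistent σ ∧ M.SurelySafe T σ t n) :
    ∃ β : Strategy L A, M.ObservationBased β ∧ M.safeProb β t T = 1 := by
  obtain ⟨σ, hσ, hsafe⟩ := exists_forall_surelySafe t h
  refine ⟨fun _ => PMF.pure ∘ σ, (hσ.comp PMF.pure).observationBased, ?_⟩
  simp [safeProb_eq_iInf_safeUpTo, safeUpTo_eq_one_of_surelySafe (hsafe _)]

open Filter in
theorem exists_safe_prefix_almostSureSafe {α : Strategy L A} (hα : M.ObservationBased α) {l : L}
    (hpos : 0 < M.safeProb α l T) :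
    ∃ w : List (A × L), 0 < M.prefProb α l w ∧ (∀ s ∈ statesOf l w, s ∈ T) ∧
      ∃ β : Strategy L A, M.ObservationBased β ∧ M.safeProb β (lastState l w) T = 1 := by
  by_contra! hbad
  have : Nonempty A := ⟨(α l []).support_nonempty.some⟩
  obtain ⟨R, hR⟩ : ∃ R, ∀ s, (¬∃ β : Strategy L A, M.ObservationBased β ∧ M.safeProb β s T = 1) →
      ∀ σ : List (A × L) → A, M.ObsConsistent σ → ¬M.SurelySafe T σ s R := by
    refine (eventually_all (l := atTop).2 fun s => ?_).exists
    by_cases hs : ∃ β : Strategy L A, M.ObservationBased β ∧ M.safeProb β s T = 1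
    · simp [hs]
    obtain ⟨n, hn⟩ : ∃ n, ∀ σ : List (A × L) → A, M.ObsConsistent σ → ¬M.SurelySafe T σ s n := by
      by_contra! h
      exact hs (almostSureSafe_of_forall_surelySafe h)
    filter_upwards [eventually_ge_atTop n] with R hnR _ σ hσ hsafe using hn σ hσ (hsafe.mono hnR)
  obtain ⟨ε, hε0, hε1, hε⟩ :=
    ENNReal.exists_pos_le_of_pos fun p : L × A × L => M.δ p.1 p.2.1 p.2.2
  choose κ hκ using fun p : PMF A => p.exists_inv_card_le
  set c := (Fintype.card A : ℝ≥0∞)⁻¹ * ε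
  have hc0 : 0 < c := ENNReal.mul_pos (by simp) hε0.ne'
  have hc1 : c ≤ 1 := mul_le_one' (ENNReal.inv_le_one.2 (by exact_mod_cast Fintype.card_pos)) hε1
  have hdecay (m : ℕ) : M.safeUpTo T (α l) l (m * R) ≤ (1 - c ^ R) ^ m := by
    refine safeUpTo_mul_le_pow _ _ R (fun w hw hp => ?_) m
    have hσ := ((hα.obsConsistent l).shiftBy w).comp κ
    have hleak := safeUpTo_add_pow_le_one hc1
      (fun h s u hu => mul_le_mul' (hκ _) (hε (s, _, u) hu))
      (hR _ (fun ⟨β, hβ, h1⟩ => hbad w hp hw β hβ h1) _ hσ)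
    have hcR : c ^ R ≠ ⊤ := ENNReal.pow_ne_top (ne_top_of_le_ne_top ENNReal.one_ne_top hc1)
    exact ENNReal.le_sub_of_add_le_right hcR hleak
  have hq : 1 - c ^ R < 1 :=
    ENNReal.sub_lt_self ENNReal.one_ne_top one_ne_zero (pow_ne_zero R hc0.ne')
  have hzero : M.safeProb α l T ≤ 0 :=
    ge_of_tendsto' (ENNReal.tendsto_pow_atTop_nhds_zero_of_lt_one hq) fun m =>
      (safeProb_eq_iInf_safeUpTo α l ▸ iInf_le _ _).trans (hdecay m)
  exact hpos.ne' (nonpos_iff_eq_zero.1 hzero)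

theorem safeProb_switchAt_pos {α₁ α₂ : Strategy L A} {l : L} {w : List (A × L)}
    (hw : 0 < M.prefProb α₁ l w) (hsafe : ∀ s ∈ statesOf l w, s ∈ T)
    (h₂ : M.safeProb α₂ (lastState l w) T = 1) :
    0 < M.safeProb (switchAt α₁ α₂ (lastState l w) w.length) l T := by
  set γ := switchAt α₁ α₂ (lastState l w) w.length
  have hprefix : M.prefProbAux (γ l) l w = M.prefProb α₁ l w :=
    prefProbAux_congr _ _ _ fun v hv => if_pos hv
  have hsuffix : shiftBy (γ l) w = α₂ (lastState l w) :=
    funext fun h => by simp [γ, switchAt, shiftBy]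
  rw [safeProb_eq_iInf_safeUpTo]
  refine hw.trans_le (le_iInf fun n => ?_)
  have hone : M.safeUpTo T (α₂ (lastState l w)) (lastState l w) n = 1 :=
    le_antisymm (safeUpTo_le_one _ _ n) (h₂ ▸ safeProb_eq_iInf_safeUpTo α₂ _ ▸ iInf_le _ n)
  calc M.prefProb α₁ l w
      = M.prefProbAux (γ l) l w * M.safeUpTo T (shiftBy (γ l) w) (lastState l w) n := by
        rw [hprefix, hsuffix, hone, mul_one]
    _ ≤ M.safeUpTo T (γ l) l (w.length + n) := prefProbAux_mul_safeUpTo_le _ _ hsafe n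
    _ ≤ M.safeUpTo T (γ l) l n := safeUpTo_antitone _ _ (Nat.le_add_left n _)

end

end POMDP

/-- Player 1 has an observation-based strategy positive winning
for `Safe(T)` from `l` iff there is a state `l'` such that Player 1 has an
observation-based strategy positive winning for `Until(T, {l'})` from `l` and an
observation-based strategy almost-sure winning for `Safe(T)` from `l'`. -/
theorem positive_safe_iff_until_almost_safe {L A O : Type}
    [Fintype L] [Fintype A] (M : POMDP L A O) (T : Set L) (l : L) :
    (∃ α : POMDP.Strategy L A, M.ObservationBased α ∧ 0 < M.safeProb α l T) ↔
      ∃ l' : L,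
        (∃ α : POMDP.Strategy L A, M.ObservationBased α ∧ 0 < M.untilProb α l T {l'}) ∧
        (∃ α : POMDP.Strategy L A, M.ObservationBased α ∧ M.safeProb α l' T = 1) := by
  constructor
  · rintro ⟨α, hα, hpos⟩
    obtain ⟨w, hw, hsafe, hwin⟩ := POMDP.exists_safe_prefix_almostSureSafe hα hpos
    exact ⟨_, ⟨α, hα, hw.trans_le (POMDP.prefProb_le_untilProb α l hsafe)⟩, hwin⟩
  · rintro ⟨l', ⟨α₁, hα₁, hu⟩, α₂, hα₂, hs⟩
    obtain ⟨w, hw, hsafe, rfl⟩ := POMDP.exists_safe_prefix_of_untilProb_pos hu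
    exact ⟨_, hα₁.switchAt hα₂ _ _, POMDP.safeProb_switchAt_pos hw hsafe hs⟩
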